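/- Let s ∈ (0, 1/2], c ∈ ℝ, and let Ω ⊂ ℝ be a bounded open set with (−2, 2) ⊆ Ω. For ρ ∈ (0,1) define φ_ρ : ℝ → ℝ by φ_ρ(x) := c + 1 if |x| < ρ; φ_ρ(x) := c + log|x|/log ρ if ρ ≤ |x| < 1; and φ_ρ(x) := c if |x| ≥ 1. Then, with Q := ℝ² \ ((ℝ\Ω)×(ℝ\Ω)), one has lim_{ρ→0⁺} ∬_Q |φ_ρ(x) − φ_ρ(y)|²/|x−y|^{1+2s} dx dy = 0. -/

import Mathlib

/-!
Write `φ_ρ = c + clamp₀₁ (log (max |x| ρ) / log ρ)`. For `|y| ≤ |x|` the difference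
`|φ_ρ x - φ_ρ y|` vanishes unless `|y| < 1` and `|x| > b := max |y| ρ`, in which case it is at most
`log (|x| / b) / |log ρ|`. Bounding the energy on `Q` by the energy on all of `ℝ²`, the integral in
`x` is then at most `C_s b ^ (-2s) / log² ρ`: split at `|x| = 2b`, using `log u ≤ u - 1` near `b`
and `log u ≲ u ^ (s/2) / s` far away. Since `s ≤ 1/2`, the integral of `max |y| ρ ^ (-2s)` over
`|y| < 1` is at most `2 (1 + |log ρ|)`, so the energy is `O((1 + |log ρ|) / log² ρ) → 0`.
-/

open MeasureTheory Set
open scoped ENNReal Topology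

noncomputable section

/-- The cross-shaped region `Q := ℝ² \ ((ℝ\Ω)×(ℝ\Ω))`. -/
def QQ1 (Ω : Set ℝ) : Set (ℝ × ℝ) := ((Ωᶜ) ×ˢ (Ωᶜ))ᶜ

/-- The Gagliardo-type energy `∬_Q |u(x)-u(y)|²/|x-y|^{1+2s} dx dy`, valued in `[0,∞]`. -/
def gagEnergy1 (s : ℝ) (Ω : Set ℝ) (u : ℝ → ℝ) : ℝ≥0∞ :=
  ∫⁻ p in QQ1 Ω, ENNReal.ofReal (|u p.1 - u p.2| ^ 2 / |p.1 - p.2| ^ (1 + 2 * s))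

/-- The auxiliary function `φ_ρ` of logarithmic type. -/
def phiRhoLog (c ρ : ℝ) (x : ℝ) : ℝ :=
  if |x| < ρ then c + 1
  else if |x| < 1 then c + Real.log |x| / Real.log ρ
  else c

open Filter

lemma abs_clamp_sub_clamp_le (a b : ℝ) :
    |max 0 (min 1 a) - max 0 (min 1 b)| ≤ |a - b| := by
  rw [max_comm 0 (min 1 a), max_comm 0 (min 1 b)]
  refine (abs_max_sub_max_le_abs _ _ _).trans ?_
  simpa using abs_min_sub_min_le_max 1 a 1 b

lemma phiRhoLog_eq_add_clamp (c : ℝ) {ρ : ℝ} (h0 : 0 < ρ) (h1 : ρ < 1) (x : ℝ) :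
    phiRhoLog c ρ x = c + max 0 (min 1 (Real.log (max |x| ρ) / Real.log ρ)) := by
  have hlρ : Real.log ρ < 0 := Real.log_neg h0 h1
  unfold phiRhoLog
  split_ifs with hxρ hx1
  · simp [max_eq_right hxρ.le, div_self hlρ.ne]
  · rw [not_lt] at hxρ
    rw [max_eq_left hxρ]
    have hle : Real.log |x| / Real.log ρ ≤ 1 :=
      (div_le_one_of_neg hlρ).2 (Real.log_le_log h0 hxρ)
    have hnn : 0 ≤ Real.log |x| / Real.log ρ :=
      div_nonneg_of_nonpos (Real.log_nonpos (abs_nonneg x) hx1.le) hlρ.le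
    rw [min_eq_right hle, max_eq_right hnn]
  · rw [not_lt] at hxρ hx1
    have hnp : Real.log (max |x| ρ) / Real.log ρ ≤ 0 :=
      div_nonpos_of_nonneg_of_nonpos (Real.log_nonneg (hx1.trans (le_max_left _ _))) hlρ.le
    rw [min_eq_right (hnp.trans zero_le_one), max_eq_left hnp, add_zero]

lemma phiRhoLog_of_one_le_abs (c : ℝ) {ρ x : ℝ} (hρ : ρ ≤ 1) (hx : 1 ≤ |x|) :
    phiRhoLog c ρ x = c := by
  simp [phiRhoLog, not_lt.2 (hρ.trans hx), not_lt.2 hx]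

lemma phiRhoLog_eq_of_abs_le_max (c : ℝ) {ρ x y : ℝ} (h0 : 0 < ρ) (h1 : ρ < 1)
    (hyx : |y| ≤ |x|) (hx : |x| ≤ max |y| ρ) :
    phiRhoLog c ρ x = phiRhoLog c ρ y := by
  have hmax : max |x| ρ = max |y| ρ :=
    le_antisymm (max_le hx (le_max_right _ _)) (max_le_max hyx le_rfl)
  rw [phiRhoLog_eq_add_clamp c h0 h1, phiRhoLog_eq_add_clamp c h0 h1, hmax]

lemma abs_phiRhoLog_sub_le (c : ℝ) {ρ x y : ℝ} (h0 : 0 < ρ) (h1 : ρ < 1)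
    (hx : max |y| ρ < |x|) :
    |phiRhoLog c ρ x - phiRhoLog c ρ y| ≤ Real.log (|x| / max |y| ρ) / (-Real.log ρ) := by
  have hb : 0 < max |y| ρ := lt_max_of_lt_right h0
  rw [phiRhoLog_eq_add_clamp c h0 h1, phiRhoLog_eq_add_clamp c h0 h1, add_sub_add_left_eq_sub,
    max_eq_left ((le_max_right _ _).trans hx.le)]
  refine (abs_clamp_sub_clamp_le _ _).trans_eq ?_
  rw [div_sub_div_same, ← Real.log_div (hb.trans hx).ne' hb.ne', abs_div,
    abs_of_neg (Real.log_neg h0 h1), abs_of_nonneg (Real.log_nonneg ((one_le_div hb).2 hx.le))]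

def logKernel (s b t : ℝ) : ℝ := Real.log (t / b) ^ 2 / (t - b) ^ (1 + 2 * s)

lemma logKernel_le_of_le_two_mul {s b t : ℝ} (hs1 : s ≤ 1 / 2) (hb : 0 < b) (hbt : b < t)
    (ht : t ≤ 2 * b) : logKernel s b t ≤ b ^ (-(1 + 2 * s)) := by
  have htb : 0 < t - b := sub_pos.2 hbt
  have hlog : Real.log (t / b) ≤ (t - b) / b := by
    have := Real.log_le_sub_one_of_pos (div_pos (hb.trans hbt) hb)
    rwa [div_sub_one hb.ne'] at this
  have hlog0 : 0 ≤ Real.log (t / b) := Real.log_nonneg ((one_le_div hb).2 hbt.le)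
  calc logKernel s b t ≤ ((t - b) / b) ^ 2 / (t - b) ^ (1 + 2 * s) := by
        unfold logKernel; gcongr
    _ = (t - b) ^ ((2 : ℝ) - (1 + 2 * s)) * b ^ (-(2 : ℝ)) := by
        rw [Real.rpow_sub htb, Real.rpow_neg hb.le, div_pow, Real.rpow_two, Real.rpow_two]
        ring
    _ ≤ b ^ ((2 : ℝ) - (1 + 2 * s)) * b ^ (-(2 : ℝ)) := by
        gcongr <;> linarith
    _ = b ^ (-(1 + 2 * s)) := by
        rw [← Real.rpow_add hb]; ring_nf

lemma logKernel_le_of_two_mul_lt {s b t : ℝ} (hs0 : 0 < s) (hs1 : s ≤ 1 / 2) (hb : 0 < b)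
    (ht : 2 * b < t) : logKernel s b t ≤ 16 / s ^ 2 * b ^ (-s) * t ^ (-(1 + s)) := by
  have htpos : 0 < t := by linarith
  have htb : 0 < t / b := div_pos htpos hb
  have hlog : Real.log (t / b) ≤ (t / b) ^ (s / 2) / (s / 2) :=
    Real.log_le_rpow_div htb.le (by positivity)
  have hlog0 : 0 ≤ Real.log (t / b) := Real.log_nonneg ((one_le_div hb).2 (by linarith))
  have htwo : (2 : ℝ) ^ (1 + 2 * s) ≤ 4 := by
    calc (2 : ℝ) ^ (1 + 2 * s) ≤ 2 ^ (2 : ℝ) :=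
          Real.rpow_le_rpow_of_exponent_le one_le_two (by linarith)
      _ = 4 := by norm_num
  have hden : t ^ (1 + 2 * s) / 4 ≤ (t - b) ^ (1 + 2 * s) := by
    calc t ^ (1 + 2 * s) / 4 ≤ t ^ (1 + 2 * s) / 2 ^ (1 + 2 * s) := by gcongr
      _ = (t / 2) ^ (1 + 2 * s) := (Real.div_rpow htpos.le zero_le_two _).symm
      _ ≤ (t - b) ^ (1 + 2 * s) := by gcongr; linarith
  calc logKernel s b t ≤ ((t / b) ^ (s / 2) / (s / 2)) ^ 2 / (t ^ (1 + 2 * s) / 4) := by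
        unfold logKernel; gcongr
    _ = 16 / s ^ 2 * b ^ (-s) * (t ^ s / t ^ (1 + 2 * s)) := by
        have hsq : ((t / b) ^ (s / 2)) ^ 2 = t ^ s * b ^ (-s) := by
          rw [← Real.rpow_natCast, ← Real.rpow_mul htb.le, Real.div_rpow htpos.le hb.le,
            Real.rpow_neg hb.le, div_eq_mul_inv]
          norm_num
        rw [div_pow, hsq]
        field_simp
        ring
    _ = 16 / s ^ 2 * b ^ (-s) * t ^ (-(1 + s)) := by
        rw [← Real.rpow_sub htpos]; ring_nf

lemma setLIntegral_Ioc_logKernel_le {s b : ℝ} (hs1 : s ≤ 1 / 2) (hb : 0 < b) :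
    ∫⁻ t in Ioc b (2 * b), ENNReal.ofReal (logKernel s b t) ≤ ENNReal.ofReal (b ^ (-(2 * s))) :=
  calc ∫⁻ t in Ioc b (2 * b), ENNReal.ofReal (logKernel s b t)
      ≤ ∫⁻ _ in Ioc b (2 * b), ENNReal.ofReal (b ^ (-(1 + 2 * s))) :=
        setLIntegral_mono' measurableSet_Ioc fun t ht =>
          ENNReal.ofReal_le_ofReal (logKernel_le_of_le_two_mul hs1 hb ht.1 ht.2)
    _ = ENNReal.ofReal (b ^ (-(1 + 2 * s)) * b) := by
        rw [setLIntegral_const, Real.volume_Ioc, ENNReal.ofReal_mul (by positivity)]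
        ring_nf
    _ = ENNReal.ofReal (b ^ (-(2 * s))) := by
        rw [← Real.rpow_add_one hb.ne']; ring_nf

lemma setLIntegral_Ioi_logKernel_le {s b : ℝ} (hs0 : 0 < s) (hs1 : s ≤ 1 / 2) (hb : 0 < b) :
    ∫⁻ t in Ioi (2 * b), ENNReal.ofReal (logKernel s b t) ≤
      ENNReal.ofReal (16 / s ^ 3 * b ^ (-(2 * s))) := by
  set K := 16 / s ^ 2 * b ^ (-s) with hK
  have hint : IntegrableOn (fun t : ℝ => K * t ^ (-(1 + s))) (Ioi (2 * b)) :=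
    (integrableOn_Ioi_rpow_of_lt (by linarith) (by positivity)).const_mul K
  calc ∫⁻ t in Ioi (2 * b), ENNReal.ofReal (logKernel s b t)
      ≤ ∫⁻ t in Ioi (2 * b), ENNReal.ofReal (K * t ^ (-(1 + s))) :=
        setLIntegral_mono' measurableSet_Ioi fun t ht =>
          ENNReal.ofReal_le_ofReal (logKernel_le_of_two_mul_lt hs0 hs1 hb ht)
    _ = ENNReal.ofReal (K * ((2 * b) ^ (-s) / s)) := by
        rw [← ofReal_integral_eq_lintegral_ofReal hint, integral_const_mul,
          integral_Ioi_rpow_of_lt (by linarith) (by positivity)]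
        · ring_nf
        · filter_upwards [ae_restrict_mem measurableSet_Ioi] with t ht
          have : 0 < t := lt_trans (by positivity) ht
          positivity
    _ ≤ ENNReal.ofReal (K * (b ^ (-s) / s)) := by
        have h2b : (2 * b) ^ (-s) ≤ b ^ (-s) :=
          Real.rpow_le_rpow_of_nonpos hb (by linarith) (by linarith)
        gcongr
    _ = ENNReal.ofReal (16 / s ^ 3 * b ^ (-(2 * s))) := by
        rw [show -(2 * s) = -s + -s by ring, Real.rpow_add hb, hK]
        field_simp

lemma setLIntegral_logKernel_le {s b : ℝ} (hs0 : 0 < s) (hs1 : s ≤ 1 / 2) (hb : 0 < b) :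
    ∫⁻ t in Ioi b, ENNReal.ofReal (logKernel s b t) ≤
      ENNReal.ofReal ((1 + 16 / s ^ 3) * b ^ (-(2 * s))) := by
  rw [← Ioc_union_Ioi_eq_Ioi (by linarith : b ≤ 2 * b),
    lintegral_union measurableSet_Ioi (Ioc_disjoint_Ioi le_rfl), add_mul, one_mul,
    ENNReal.ofReal_add (by positivity) (by positivity)]
  exact add_le_add (setLIntegral_Ioc_logKernel_le hs1 hb)
    (setLIntegral_Ioi_logKernel_le hs0 hs1 hb)

lemma lintegral_comp_abs (G : ℝ → ℝ≥0∞) : ∫⁻ x, G |x| = 2 * ∫⁻ t in Ioi 0, G t := by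
  have hneg : ∫⁻ x in Iio 0, G |x| = ∫⁻ t in Ioi 0, G t := by
    rw [← (Measure.measurePreserving_neg volume).setLIntegral_comp_preimage_emb
      (Homeomorph.neg ℝ).measurableEmbedding G (Ioi 0), neg_preimage, neg_Ioi, neg_zero]
    exact setLIntegral_congr_fun measurableSet_Iio fun x hx => by rw [abs_of_neg hx]
  have hpos : ∫⁻ x in Ici 0, G |x| = ∫⁻ t in Ioi 0, G t := by
    rw [setLIntegral_congr Ioi_ae_eq_Ici.symm]
    exact setLIntegral_congr_fun measurableSet_Ioi fun x hx => by rw [abs_of_pos hx]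
  rw [← lintegral_add_compl _ (measurableSet_Iio (a := (0 : ℝ))), compl_Iio, hneg, hpos,
    two_mul]

lemma setLIntegral_max_rpow_le {s ρ : ℝ} (hs1 : s ≤ 1 / 2) (h0 : 0 < ρ) (h1 : ρ < 1) :
    ∫⁻ t in Ioo 0 1, ENNReal.ofReal (max t ρ ^ (-(2 * s))) ≤ ENNReal.ofReal (1 - Real.log ρ) := by
  have hnear : ∫⁻ t in Ioc 0 ρ, ENNReal.ofReal (max t ρ ^ (-(2 * s))) ≤ 1 :=
    calc ∫⁻ t in Ioc 0 ρ, ENNReal.ofReal (max t ρ ^ (-(2 * s)))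
        = ∫⁻ _ in Ioc 0 ρ, ENNReal.ofReal (ρ ^ (-(2 * s))) :=
          setLIntegral_congr_fun measurableSet_Ioc fun t ht => by rw [max_eq_right ht.2]
      _ = ENNReal.ofReal (ρ ^ (1 - 2 * s)) := by
          rw [setLIntegral_const, Real.volume_Ioc, sub_zero, ← ENNReal.ofReal_mul (by positivity),
            ← Real.rpow_add_one h0.ne']
          ring_nf
      _ ≤ 1 := ENNReal.ofReal_le_one.2 (Real.rpow_le_one h0.le h1.le (by linarith))
  have hint : IntegrableOn (fun t : ℝ => t⁻¹) (Ioo ρ 1) :=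
    ((continuousOn_inv₀.mono fun t ht => (h0.trans_le ht.1).ne').integrableOn_Icc).mono_set
      Ioo_subset_Icc_self
  have hfar : ∫⁻ t in Ioo ρ 1, ENNReal.ofReal (max t ρ ^ (-(2 * s))) ≤
      ENNReal.ofReal (-Real.log ρ) :=
    calc ∫⁻ t in Ioo ρ 1, ENNReal.ofReal (max t ρ ^ (-(2 * s)))
        ≤ ∫⁻ t in Ioo ρ 1, ENNReal.ofReal t⁻¹ :=
          setLIntegral_mono' measurableSet_Ioo fun t ht => by
            have htpos : 0 < t := h0.trans ht.1
            rw [max_eq_left ht.1.le, ← Real.rpow_neg_one]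
            exact ENNReal.ofReal_le_ofReal
              (Real.rpow_le_rpow_of_exponent_ge htpos ht.2.le (by linarith))
      _ = ENNReal.ofReal (-Real.log ρ) := by
          rw [← ofReal_integral_eq_lintegral_ofReal hint, ← integral_Ioc_eq_integral_Ioo,
            ← intervalIntegral.integral_of_le h1.le, integral_inv_of_pos h0 one_pos, div_eq_mul_inv,
            one_mul, Real.log_inv]
          filter_upwards [ae_restrict_mem measurableSet_Ioo] with t ht
          exact inv_nonneg.2 (h0.trans ht.1).le
  rw [← Ioc_union_Ioo_eq_Ioo h0.le h1, sub_eq_add_neg,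
    ENNReal.ofReal_add zero_le_one (neg_nonneg.2 (Real.log_nonpos h0.le h1.le)),
    ENNReal.ofReal_one]
  exact (lintegral_union_le _ _ _).trans (add_le_add hnear hfar)

def logCutoffMajorant (s ρ y x : ℝ) : ℝ≥0∞ :=
  if |y| < 1 then
    (Ioi (max |y| ρ)).indicator (fun t => ENNReal.ofReal (logKernel s (max |y| ρ) t)) |x|
  else 0

lemma measurable_logCutoffMajorant (s ρ : ℝ) :
    Measurable (Function.uncurry (logCutoffMajorant s ρ)) := by
  unfold logCutoffMajorant logKernel Function.uncurry
  simp only [Set.indicator_apply, mem_Ioi]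
  refine Measurable.ite (measurableSet_lt (by fun_prop) measurable_const)
    (Measurable.ite (measurableSet_lt (by fun_prop) (by fun_prop)) (by fun_prop) measurable_const)
    measurable_const

lemma lintegral_logCutoffMajorant_le {s ρ : ℝ} (hs0 : 0 < s) (hs1 : s ≤ 1 / 2) (h0 : 0 < ρ)
    (y : ℝ) :
    ∫⁻ x, logCutoffMajorant s ρ y x ≤ (Iio 1).indicator
      (fun t => ENNReal.ofReal (2 * (1 + 16 / s ^ 3)) * ENNReal.ofReal (max t ρ ^ (-(2 * s))))
      |y| := by
  by_cases hy : |y| < 1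
  · have hb : 0 < max |y| ρ := lt_max_of_lt_right h0
    simp only [logCutoffMajorant, if_pos hy, indicator_of_mem (mem_Iio.2 hy)]
    rw [lintegral_comp_abs, setLIntegral_indicator measurableSet_Ioi,
      inter_eq_left.2 (Ioi_subset_Ioi hb.le), ← ENNReal.ofReal_mul (by positivity),
      mul_assoc, ENNReal.ofReal_mul zero_le_two, ENNReal.ofReal_ofNat]
    gcongr
    exact setLIntegral_logKernel_le hs0 hs1 hb
  · simp [logCutoffMajorant, hy]

lemma lintegral_lintegral_logCutoffMajorant_le {s ρ : ℝ} (hs0 : 0 < s) (hs1 : s ≤ 1 / 2)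
    (h0 : 0 < ρ) (h1 : ρ < 1) :
    ∫⁻ y, ∫⁻ x, logCutoffMajorant s ρ y x ≤
      ENNReal.ofReal (4 * (1 + 16 / s ^ 3) * (1 - Real.log ρ)) := by
  calc ∫⁻ y, ∫⁻ x, logCutoffMajorant s ρ y x
      ≤ ∫⁻ y, (Iio 1).indicator (fun t => ENNReal.ofReal (2 * (1 + 16 / s ^ 3)) *
          ENNReal.ofReal (max t ρ ^ (-(2 * s)))) |y| :=
        lintegral_mono fun y => lintegral_logCutoffMajorant_le hs0 hs1 h0 y
    _ = 2 * ENNReal.ofReal (2 * (1 + 16 / s ^ 3)) *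
          ∫⁻ t in Ioo 0 1, ENNReal.ofReal (max t ρ ^ (-(2 * s))) := by
        rw [lintegral_comp_abs, setLIntegral_indicator measurableSet_Iio, Iio_inter_Ioi,
          lintegral_const_mul' _ _ ENNReal.ofReal_ne_top, mul_assoc]
    _ ≤ 2 * ENNReal.ofReal (2 * (1 + 16 / s ^ 3)) * ENNReal.ofReal (1 - Real.log ρ) := by
        gcongr
        exact setLIntegral_max_rpow_le hs1 h0 h1
    _ = ENNReal.ofReal (4 * (1 + 16 / s ^ 3) * (1 - Real.log ρ)) := by
        rw [← ENNReal.ofReal_ofNat 2, ← ENNReal.ofReal_mul zero_le_two,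
          ← ENNReal.ofReal_mul (by positivity)]
        ring_nf

lemma ofReal_energyDensity_phiRhoLog_le (c : ℝ) {s ρ x y : ℝ} (hs : 0 ≤ s) (h0 : 0 < ρ)
    (h1 : ρ < 1) (hyx : |y| ≤ |x|) :
    ENNReal.ofReal (|phiRhoLog c ρ x - phiRhoLog c ρ y| ^ 2 / |x - y| ^ (1 + 2 * s)) ≤
      ENNReal.ofReal (Real.log ρ ^ 2)⁻¹ * logCutoffMajorant s ρ y x := by
  rcases le_or_gt 1 |y| with hy | hy
  · simp [phiRhoLog_of_one_le_abs c h1.le hy, phiRhoLog_of_one_le_abs c h1.le (hy.trans hyx)]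
  set b := max |y| ρ
  rcases le_or_gt |x| b with hxb | hxb
  · simp [phiRhoLog_eq_of_abs_le_max c h0 h1 hyx hxb]
  rw [logCutoffMajorant, if_pos hy, indicator_of_mem (mem_Ioi.2 hxb),
    ← ENNReal.ofReal_mul (by positivity)]
  refine ENNReal.ofReal_le_ofReal ?_
  have hxy : |x| - b ≤ |x - y| :=
    (sub_le_sub_left (le_max_left _ _) _).trans (abs_sub_abs_le_abs_sub x y)
  calc |phiRhoLog c ρ x - phiRhoLog c ρ y| ^ 2 / |x - y| ^ (1 + 2 * s)
      ≤ (Real.log (|x| / b) / (-Real.log ρ)) ^ 2 / (|x| - b) ^ (1 + 2 * s) := by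
        have hsub : 0 < |x| - b := sub_pos.2 hxb
        gcongr
        exact abs_phiRhoLog_sub_le c h0 h1 hxb
    _ = (Real.log ρ ^ 2)⁻¹ * logKernel s b |x| := by
        rw [logKernel, div_pow, neg_sq]; ring

lemma gagEnergy1_phiRhoLog_le {s : ℝ} (hs0 : 0 < s) (hs1 : s ≤ 1 / 2) (c : ℝ) (Ω : Set ℝ)
    {ρ : ℝ} (h0 : 0 < ρ) (h1 : ρ < 1) :
    gagEnergy1 s Ω (phiRhoLog c ρ) ≤
      ENNReal.ofReal (8 * (1 + 16 / s ^ 3) * (1 - Real.log ρ) / Real.log ρ ^ 2) := by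
  set M := Function.uncurry (logCutoffMajorant s ρ)
  set k := ENNReal.ofReal (Real.log ρ ^ 2)⁻¹
  have hdensity : ∀ p : ℝ × ℝ, ENNReal.ofReal (|phiRhoLog c ρ p.1 - phiRhoLog c ρ p.2| ^ 2 /
      |p.1 - p.2| ^ (1 + 2 * s)) ≤ k * (M p.swap + M p) := by
    rintro ⟨x, y⟩
    rcases le_total |y| |x| with hyx | hxy
    · exact (ofReal_energyDensity_phiRhoLog_le c hs0.le h0 h1 hyx).trans
        (mul_le_mul_right le_self_add _)
    · rw [abs_sub_comm (phiRhoLog c ρ x), abs_sub_comm x]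
      exact (ofReal_energyDensity_phiRhoLog_le c hs0.le h0 h1 hxy).trans
        (mul_le_mul_right le_add_self _)
  have hM : Measurable M := measurable_logCutoffMajorant s ρ
  calc gagEnergy1 s Ω (phiRhoLog c ρ)
      ≤ ∫⁻ p : ℝ × ℝ, k * (M p.swap + M p) :=
        (setLIntegral_le_lintegral _ _).trans (lintegral_mono hdensity)
    _ = k * (2 * ∫⁻ p, M p) := by
        rw [lintegral_const_mul' _ _ ENNReal.ofReal_ne_top, lintegral_add_right _ hM,
          Measure.volume_eq_prod, lintegral_prod_swap, two_mul]
    _ ≤ k * (2 * ∫⁻ y, ∫⁻ x, logCutoffMajorant s ρ y x) := by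
        gcongr
        exact lintegral_prod_le M
    _ ≤ k * (2 * ENNReal.ofReal (4 * (1 + 16 / s ^ 3) * (1 - Real.log ρ))) := by
        gcongr
        exact lintegral_lintegral_logCutoffMajorant_le hs0 hs1 h0 h1
    _ = ENNReal.ofReal (8 * (1 + 16 / s ^ 3) * (1 - Real.log ρ) / Real.log ρ ^ 2) := by
        have hlog : 0 ≤ 1 - Real.log ρ := by linarith [Real.log_nonpos h0.le h1.le]
        rw [← ENNReal.ofReal_ofNat 2, ← ENNReal.ofReal_mul zero_le_two,
          ← ENNReal.ofReal_mul (by positivity)]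
        ring_nf

lemma tendsto_mul_one_sub_div_sq_atBot (C : ℝ) :
    Tendsto (fun L : ℝ => C * (1 - L) / L ^ 2) atBot (𝓝 0) := by
  have hinv := tendsto_inv_atBot_zero (𝕜 := ℝ)
  have hlim : Tendsto (fun L : ℝ => C * (L⁻¹ ^ 2 - L⁻¹)) atBot (𝓝 0) := by
    simpa using ((hinv.pow 2).sub hinv).const_mul C
  refine hlim.congr fun L => ?_
  rcases eq_or_ne L 0 with rfl | hL
  · simp
  · field_simp

theorem statement19_general {s : ℝ} (hs0 : 0 < s) (hs1 : s ≤ 1 / 2) (c : ℝ)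
    {Ω : Set ℝ} :
    Filter.Tendsto (fun ρ : ℝ => gagEnergy1 s Ω (phiRhoLog c ρ))
      (nhdsWithin 0 (Set.Ioo (0 : ℝ) 1)) (nhds 0) := by
  have hlog : Tendsto Real.log (𝓝[Ioo 0 1] 0) atBot :=
    Real.tendsto_log_nhdsGT_zero.mono_left (nhdsWithin_mono _ Ioo_subset_Ioi_self)
  have hbound : Tendsto (fun ρ => ENNReal.ofReal (8 * (1 + 16 / s ^ 3) * (1 - Real.log ρ) /
      Real.log ρ ^ 2)) (𝓝[Ioo 0 1] 0) (𝓝 0) := by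
    simpa using ENNReal.tendsto_ofReal ((tendsto_mul_one_sub_div_sq_atBot _).comp hlog)
  refine tendsto_of_tendsto_of_tendsto_of_le_of_le' tendsto_const_nhds hbound
    (Eventually.of_forall fun _ => zero_le) ?_
  filter_upwards [self_mem_nhdsWithin] with ρ hρ
  exact gagEnergy1_phiRhoLog_le hs0 hs1 c Ω hρ.1 hρ.2

/-- for `n = 1` and `s ∈ (0, 1/2]`, the Gagliardo energy of the logarithmic
cutoff `φ_ρ` vanishes as `ρ → 0⁺`. -/
theorem statement19 {s : ℝ} (hs0 : 0 < s) (hs1 : s ≤ 1 / 2) (c : ℝ)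
    {Ω : Set ℝ} (hΩo : IsOpen Ω) (hΩb : Bornology.IsBounded Ω)
    (hB2 : Set.Ioo (-2 : ℝ) 2 ⊆ Ω) :
    Filter.Tendsto (fun ρ : ℝ => gagEnergy1 s Ω (phiRhoLog c ρ))
      (nhdsWithin 0 (Set.Ioo (0 : ℝ) 1)) (nhds 0) :=
  statement19_general hs0 hs1 c
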